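/- arXiv:1212.0226 — 3 statements merged into one kernel-verified Lean document; each statement's English description precedes it below -/
import Mathlib

section
/- Let G_x ∈ ℝ^{n×m}, G_r ∈ ℝ^{p×m} with ker(G_r) ⊆ ker(G_x), δ > 0. Let λ* be the largest generalized eigenvalue of the pencil (G_xᵀG_x, G_rᵀG_r) with unit-norm eigenvector v* (so G_r v* ≠ 0). Then a* = (δ/‖G_r v*‖₂) v* satisfies ‖G_r a*‖₂ = δ and ‖G_x a*‖₂² = λ* δ², and for every a with ‖G_r a‖₂ ≤ δ one has ‖G_x a‖₂² ≤ λ* δ². -/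
/-!
The heart is the bound `‖G_x a‖² ≤ λ* ‖G_r a‖²` for every `a`. Since `ker G_r ⊆ ker G_x`, both
quadratic forms are unchanged by adding a vector of `ker G_r`, so the generalized Rayleigh quotient
`‖G_x a‖² / ‖G_r a‖²` only needs to be maximized on the unit sphere of a complement of `ker G_r`,
which is compact and on which the denominator is positive. At a maximizer `x` with value `μ`, the
form `μ G_rᵀG_r - G_xᵀG_x` is positive semidefinite and vanishes at `x`, so `x` lies in its kernel:
`x` is a generalized eigenvector and `μ ≤ λ*`. The scaled eigenvector `a*` attains the bound because
`‖G_x v*‖² = λ* ‖G_r v*‖²`.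
-/

open Matrix

lemma IsCompact.exists_forall_mul_le_mul {E : Type*} [TopologicalSpace E] {S : Set E}
    (hS : IsCompact S) (hne : S.Nonempty) {f g : E → ℝ} (hf : Continuous f) (hg : Continuous g)
    (hpos : ∀ x ∈ S, 0 < g x) : ∃ x ∈ S, ∀ y ∈ S, f y * g x ≤ f x * g y := by
  obtain ⟨x, hxS, hmax⟩ := hS.exists_isMaxOn hne <|
    hf.continuousOn.div hg.continuousOn fun y hy => (hpos y hy).ne'
  exact ⟨x, hxS, fun y hy => (div_le_div_iff₀ (hpos y hy) (hpos x hxS)).1 (hmax hy)⟩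

section GeneralizedRayleighQuotient

variable {ι κ η : Type*} [Fintype ι] [Fintype κ] [Fintype η]

def generalizedEigenvalues (A B : Matrix ι ι ℝ) : Set ℝ :=
  {μ | ∃ v : ι → ℝ, B *ᵥ v ≠ 0 ∧ A *ᵥ v = μ • B *ᵥ v}

lemma sum_sq_mulVec_eq_dotProduct (G : Matrix κ ι ℝ) (a : ι → ℝ) :
    ∑ i, (G *ᵥ a) i ^ 2 = a ⬝ᵥ (Gᵀ * G) *ᵥ a := by
  rw [← mulVec_mulVec, dotProduct_mulVec, vecMul_transpose]
  simp [dotProduct, sq]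

lemma sum_sq_mulVec_smul (G : Matrix κ ι ℝ) (c : ℝ) (a : ι → ℝ) :
    ∑ i, (G *ᵥ (c • a)) i ^ 2 = c ^ 2 * ∑ i, (G *ᵥ a) i ^ 2 := by
  simp only [mulVec_smul, Pi.smul_apply, smul_eq_mul, mul_pow, Finset.mul_sum]

lemma sum_sq_mulVec_pos {G : Matrix κ ι ℝ} {a : ι → ℝ} (h : G *ᵥ a ≠ 0) :
    0 < ∑ i, (G *ᵥ a) i ^ 2 := by
  obtain ⟨i, hi⟩ := Function.ne_iff.1 h
  exact Finset.sum_pos' (fun j _ => sq_nonneg _) ⟨i, Finset.mem_univ i, sq_pos_of_ne_zero hi⟩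

lemma isHermitian_transpose_mul_self (G : Matrix κ ι ℝ) : (Gᵀ * G).IsHermitian := by
  simpa using (posSemidef_conjTranspose_mul_self G).isHermitian

lemma mulVec_eq_smul_of_sum_sq_mulVec_le (Gx : Matrix κ ι ℝ) (Gr : Matrix η ι ℝ) {μ : ℝ}
    {x : ι → ℝ} (hle : ∀ a, ∑ i, (Gx *ᵥ a) i ^ 2 ≤ μ * ∑ i, (Gr *ᵥ a) i ^ 2)
    (heq : ∑ i, (Gx *ᵥ x) i ^ 2 = μ * ∑ i, (Gr *ᵥ x) i ^ 2) :
    (Gxᵀ * Gx) *ᵥ x = μ • (Grᵀ * Gr) *ᵥ x := by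
  have hform : ∀ a, star a ⬝ᵥ (μ • (Grᵀ * Gr) - Gxᵀ * Gx) *ᵥ a
      = μ * ∑ i, (Gr *ᵥ a) i ^ 2 - ∑ i, (Gx *ᵥ a) i ^ 2 := fun a => by
    simp only [sum_sq_mulVec_eq_dotProduct, sub_mulVec, smul_mulVec, dotProduct_sub,
      dotProduct_smul, smul_eq_mul, star_trivial]
  have hpsd : (μ • (Grᵀ * Gr) - Gxᵀ * Gx).PosSemidef := by
    refine .of_dotProduct_mulVec_nonneg ?_ fun a => by rw [hform]; linarith [hle a]
    exact ((isHermitian_transpose_mul_self Gr).smul (IsSelfAdjoint.all μ)).sub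
      (isHermitian_transpose_mul_self Gx)
  have hx := (hpsd.dotProduct_mulVec_zero_iff x).1 (by rw [hform, heq, sub_self])
  rw [sub_mulVec, smul_mulVec, sub_eq_zero] at hx
  exact hx.symm

lemma exists_forall_sum_sq_mulVec_mul_le (Gx : Matrix κ ι ℝ) (Gr : Matrix η ι ℝ)
    (hker : ∀ a, Gr *ᵥ a = 0 → Gx *ᵥ a = 0) (hne : ∃ a, Gr *ᵥ a ≠ 0) :
    ∃ x, Gr *ᵥ x ≠ 0 ∧ ∀ a, (∑ i, (Gx *ᵥ a) i ^ 2) * ∑ i, (Gr *ᵥ x) i ^ 2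
      ≤ (∑ i, (Gx *ᵥ x) i ^ 2) * ∑ i, (Gr *ᵥ a) i ^ 2 := by
  obtain ⟨W, hW⟩ := Submodule.exists_isCompl (LinearMap.ker Gr.mulVecLin)
  have hdecomp : ∀ a, ∃ w ∈ W, Gx *ᵥ a = Gx *ᵥ w ∧ Gr *ᵥ a = Gr *ᵥ w := by
    intro a
    obtain ⟨k, hk, w, hw, rfl⟩ :=
      Submodule.mem_sup.1 (hW.sup_eq_top ▸ Submodule.mem_top (x := a))
    have hk : Gr *ᵥ k = 0 := hk
    exact ⟨w, hw, by rw [mulVec_add, hker k hk, zero_add], by rw [mulVec_add, hk, zero_add]⟩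
  set S := Metric.sphere (0 : ι → ℝ) 1 ∩ W
  have hS : ∀ u ∈ S, Gr *ᵥ u ≠ 0 := by
    rintro u ⟨hu1, huW⟩ hu
    have : u ∈ LinearMap.ker Gr.mulVecLin ⊓ W := ⟨hu, huW⟩
    rw [hW.inf_eq_bot, Submodule.mem_bot] at this
    simp [this] at hu1
  have hnormalize : ∀ w ∈ W, w ≠ 0 → ‖w‖⁻¹ • w ∈ S := fun w hw hw0 =>
    ⟨by simp [norm_smul, hw0], W.smul_mem _ hw⟩
  have hSne : S.Nonempty := by
    obtain ⟨a, ha⟩ := hne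
    obtain ⟨w, hw, -, hGr⟩ := hdecomp a
    exact ⟨_, hnormalize w hw fun h => ha (by rw [hGr, h, mulVec_zero])⟩
  obtain ⟨x, hxS, hmax⟩ := ((isCompact_sphere 0 1).inter_right
    W.closed_of_finiteDimensional).exists_forall_mul_le_mul hSne
    (f := fun a => ∑ i, (Gx *ᵥ a) i ^ 2) (g := fun a => ∑ i, (Gr *ᵥ a) i ^ 2)
    (by fun_prop) (by fun_prop) fun u hu => sum_sq_mulVec_pos (hS u hu)
  refine ⟨x, hS x hxS, fun a => ?_⟩
  obtain ⟨w, hwW, hGx, hGr⟩ := hdecomp a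
  rw [hGx, hGr]
  rcases eq_or_ne w 0 with rfl | hw0
  · simp
  · have hw : w = ‖w‖ • ‖w‖⁻¹ • w := by
      rw [smul_smul, mul_inv_cancel₀ (norm_ne_zero_iff.2 hw0), one_smul]
    have hu := hmax _ (hnormalize w hwW hw0)
    generalize ‖w‖⁻¹ • w = u at hw hu
    rw [hw, sum_sq_mulVec_smul, sum_sq_mulVec_smul, mul_assoc, mul_left_comm _ (‖w‖ ^ 2)]
    exact mul_le_mul_of_nonneg_left hu (sq_nonneg _)

lemma sum_sq_mulVec_le_mul_of_mem_upperBounds (Gx : Matrix κ ι ℝ) (Gr : Matrix η ι ℝ)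
    (hker : ∀ a, Gr *ᵥ a = 0 → Gx *ᵥ a = 0) (hne : ∃ a, Gr *ᵥ a ≠ 0) {lam : ℝ}
    (hlam : lam ∈ upperBounds (generalizedEigenvalues (Gxᵀ * Gx) (Grᵀ * Gr))) (a : ι → ℝ) :
    ∑ i, (Gx *ᵥ a) i ^ 2 ≤ lam * ∑ i, (Gr *ᵥ a) i ^ 2 := by
  obtain ⟨x, hx, hmax⟩ := exists_forall_sum_sq_mulVec_mul_le Gx Gr hker hne
  have hxpos := sum_sq_mulVec_pos hx
  set μ := (∑ i, (Gx *ᵥ x) i ^ 2) / ∑ i, (Gr *ᵥ x) i ^ 2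
  have hle : ∀ b, ∑ i, (Gx *ᵥ b) i ^ 2 ≤ μ * ∑ i, (Gr *ᵥ b) i ^ 2 := fun b => by
    rw [div_mul_eq_mul_div, le_div_iff₀ hxpos]
    exact hmax b
  have heig := mulVec_eq_smul_of_sum_sq_mulVec_le Gx Gr hle (div_mul_cancel₀ _ hxpos.ne').symm
  have hBx : (Grᵀ * Gr) *ᵥ x ≠ 0 := fun h => by
    rw [sum_sq_mulVec_eq_dotProduct, h, dotProduct_zero] at hxpos
    exact hxpos.false
  calc ∑ i, (Gx *ᵥ a) i ^ 2 ≤ μ * ∑ i, (Gr *ᵥ a) i ^ 2 := hle a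
    _ ≤ lam * ∑ i, (Gr *ᵥ a) i ^ 2 :=
      mul_le_mul_of_nonneg_right (hlam ⟨x, hBx, heig⟩) (Finset.sum_nonneg fun i _ => sq_nonneg _)

end GeneralizedRayleighQuotient

theorem optimal_bias_injection_attack_general
    {n m p : ℕ}
    (Gx : Matrix (Fin n) (Fin m) ℝ) (Gr : Matrix (Fin p) (Fin m) ℝ)
    (hker : ∀ a : Fin m → ℝ, Gr.mulVec a = 0 → Gx.mulVec a = 0)
    (δ : ℝ)
    (lamStar : ℝ) (vStar : Fin m → ℝ)
    (hgreatest : IsGreatest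
      {μ : ℝ | ∃ v : Fin m → ℝ, (Grᵀ * Gr).mulVec v ≠ 0 ∧
        (Gxᵀ * Gx).mulVec v = μ • (Grᵀ * Gr).mulVec v} lamStar)
    (hvStar : (Grᵀ * Gr).mulVec vStar ≠ 0 ∧
      (Gxᵀ * Gx).mulVec vStar = lamStar • (Grᵀ * Gr).mulVec vStar)
    (hGrv : Gr.mulVec vStar ≠ 0)
    (aStar : Fin m → ℝ)
    (haStar : aStar = (δ / Real.sqrt (∑ i, (Gr.mulVec vStar i) ^ 2)) • vStar) :
    (∑ i, (Gr.mulVec aStar i) ^ 2 = δ ^ 2) ∧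
    (∑ i, (Gx.mulVec aStar i) ^ 2 = lamStar * δ ^ 2) ∧
    (∀ a : Fin m → ℝ, (∑ i, (Gr.mulVec a i) ^ 2) ≤ δ ^ 2 →
      (∑ i, (Gx.mulVec a i) ^ 2) ≤ lamStar * δ ^ 2) := by
  have hpos := sum_sq_mulVec_pos hGrv
  have hscale : (δ / √(∑ i, (Gr *ᵥ vStar) i ^ 2)) ^ 2 * ∑ i, (Gr *ᵥ vStar) i ^ 2 = δ ^ 2 := by
    rw [div_pow, Real.sq_sqrt hpos.le, div_mul_cancel₀ _ hpos.ne']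
  have hxv : ∑ i, (Gx *ᵥ vStar) i ^ 2 = lamStar * ∑ i, (Gr *ᵥ vStar) i ^ 2 := by
    rw [sum_sq_mulVec_eq_dotProduct, hvStar.2, dotProduct_smul, smul_eq_mul,
      ← sum_sq_mulVec_eq_dotProduct]
  have hlam : 0 ≤ lamStar :=
    nonneg_of_mul_nonneg_left (hxv ▸ Finset.sum_nonneg fun i _ => sq_nonneg _) hpos
  subst haStar
  refine ⟨by rw [sum_sq_mulVec_smul, hscale],
    by rw [sum_sq_mulVec_smul, hxv, mul_left_comm, hscale], fun a ha => ?_⟩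
  calc ∑ i, (Gx *ᵥ a) i ^ 2
      ≤ lamStar * ∑ i, (Gr *ᵥ a) i ^ 2 :=
        sum_sq_mulVec_le_mul_of_mem_upperBounds Gx Gr hker ⟨vStar, hGrv⟩ hgreatest.2 a
    _ ≤ lamStar * δ ^ 2 := mul_le_mul_of_nonneg_left ha hlam

theorem optimal_bias_injection_attack
    {n m p : ℕ}
    (Gx : Matrix (Fin n) (Fin m) ℝ) (Gr : Matrix (Fin p) (Fin m) ℝ)
    (hker : ∀ a : Fin m → ℝ, Gr.mulVec a = 0 → Gx.mulVec a = 0)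
    (δ : ℝ) (hδ : 0 < δ)
    (lamStar : ℝ) (vStar : Fin m → ℝ)
    (hgreatest : IsGreatest
      {μ : ℝ | ∃ v : Fin m → ℝ, (Grᵀ * Gr).mulVec v ≠ 0 ∧
        (Gxᵀ * Gx).mulVec v = μ • (Grᵀ * Gr).mulVec v} lamStar)
    (hvStar : (Grᵀ * Gr).mulVec vStar ≠ 0 ∧
      (Gxᵀ * Gx).mulVec vStar = lamStar • (Grᵀ * Gr).mulVec vStar)
    (hunit : ∑ i, (vStar i) ^ 2 = 1)
    (hGrv : Gr.mulVec vStar ≠ 0)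
    (aStar : Fin m → ℝ)
    (haStar : aStar = (δ / Real.sqrt (∑ i, (Gr.mulVec vStar i) ^ 2)) • vStar) :
    (∑ i, (Gr.mulVec aStar i) ^ 2 = δ ^ 2) ∧
    (∑ i, (Gx.mulVec aStar i) ^ 2 = lamStar * δ ^ 2) ∧
    (∀ a : Fin m → ℝ, (∑ i, (Gr.mulVec a i) ^ 2) ≤ δ ^ 2 →
      (∑ i, (Gx.mulVec a i) ^ 2) ≤ lamStar * δ ^ 2) :=
  optimal_bias_injection_attack_general Gx Gr hker δ lamStar vStar hgreatest hvStar hGrv aStar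
    haStar
end

section
/- Let G_x ∈ ℝ^{n×m}, G_r ∈ ℝ^{p×m}, δ > 0, and for each i ∈ {1,…,n} let λ*_i be the largest generalized eigenvalue of the pencil (G_xᵀ e_i e_iᵀ G_x, G_rᵀ G_r), where e_i is the i-th standard basis vector; assume ker(G_r) ⊆ ker(e_iᵀG_x) for all i. Let λ* = max_i λ*_i. Then max{‖G_x a‖_∞ : ‖G_r a‖₂ ≤ δ} = √(λ*) · δ. -/
open Matrix BigOperators

/-!
Write `g` for a row of `G_x` and `B = G_rᵀ G_r`. As `ker G_r ⊆ ker gᵀ`, `g = B u` for some `u`,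
so `g ⬝ a = ⟪G_r u, G_r a⟫` and Cauchy–Schwarz gives `(g ⬝ a)² ≤ (g ⬝ u) ‖G_r a‖²`; but (if
`g ≠ 0`) `u` is itself an eigenvector of the rank-one pencil `(g gᵀ, B)` with eigenvalue `g ⬝ u`,
hence `(g ⬝ a)² ≤ λ*ᵢ ‖G_r a‖²`. Conversely an eigenvector `v` for `λ*ᵢ` normalised by
`‖G_r v‖ = 1` has `(g ⬝ v)² = λ*ᵢ`, so `δ v` attains the bound on the row realising the
largest eigenvalue.
-/

namespace Matrix

variable {ι κ : Type*} [Fintype ι] [Fintype κ]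

def pencilEigenvalues (A B : Matrix ι ι ℝ) : Set ℝ :=
  {μ | ∃ v, B *ᵥ v ≠ 0 ∧ A *ᵥ v = μ • B *ᵥ v}

omit [Fintype ι] in
theorem transpose_mul_single_mul (G : Matrix κ ι ℝ) [DecidableEq κ] (i : κ) :
    Gᵀ * single i i (1 : ℝ) * G = vecMulVec (G i) (G i) := by
  ext j k
  simp [mul_apply, single_apply, vecMulVec, ite_and]

theorem vecMulVec_self_mulVec (g v : ι → ℝ) : vecMulVec g g *ᵥ v = (g ⬝ᵥ v) • g := by
  rw [vecMulVec_mulVec, op_smul_eq_smul]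

theorem transpose_mul_self_mulVec_dotProduct (G : Matrix κ ι ℝ) (v a : ι → ℝ) :
    (Gᵀ * G) *ᵥ v ⬝ᵥ a = G *ᵥ v ⬝ᵥ G *ᵥ a := by
  rw [← mulVec_mulVec, dotProduct_comm, dotProduct_mulVec, vecMul_transpose, dotProduct_comm]

theorem transpose_mul_self_mulVec_dotProduct_self (G : Matrix κ ι ℝ) (v : ι → ℝ) :
    (Gᵀ * G) *ᵥ v ⬝ᵥ v = ∑ j, (G *ᵥ v) j ^ 2 := by
  rw [transpose_mul_self_mulVec_dotProduct]
  simp only [dotProduct, sq]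

theorem exists_transpose_mul_self_mulVec_eq (G : Matrix κ ι ℝ) {w : ι → ℝ}
    (hw : ∀ a, G *ᵥ a = 0 → w ⬝ᵥ a = 0) : ∃ u, (Gᵀ * G) *ᵥ u = w := by
  classical
  let A : EuclideanSpace ℝ ι →ₗ[ℝ] EuclideanSpace ℝ κ := toLpLin 2 2 G
  have hadj : A.adjoint = toLpLin 2 2 Gᵀ := by
    symm
    rw [LinearMap.eq_adjoint_iff]
    intro x y
    simp [A, EuclideanSpace.inner_eq_star_dotProduct, dotProduct_mulVec, vecMul_transpose]
  have hw' : WithLp.toLp 2 w ∈ (A.adjoint ∘ₗ A).range := by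
    rw [LinearMap.range_adjoint_comp_self, ← LinearMap.orthogonal_ker]
    intro z hz
    simpa [EuclideanSpace.inner_eq_star_dotProduct, dotProduct_comm] using
      hw z (by simpa [A] using congrArg WithLp.ofLp hz)
  obtain ⟨u, hu⟩ := hw'
  exact ⟨u, by simpa [hadj, A, mulVec_mulVec] using congrArg WithLp.ofLp hu⟩

section RankOne

variable {g : ι → ℝ} {G : Matrix κ ι ℝ} {μ : ℝ}

theorem exists_sq_dotProduct_eq_of_mem_pencilEigenvalues
    (hμ : μ ∈ pencilEigenvalues (vecMulVec g g) (Gᵀ * G)) :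
    ∃ v, ∑ j, (G *ᵥ v) j ^ 2 = 1 ∧ (g ⬝ᵥ v) ^ 2 = μ := by
  obtain ⟨v, hBv, hv⟩ := hμ
  have hGv : G *ᵥ v ≠ 0 := fun h => hBv (by rw [← mulVec_mulVec, h, mulVec_zero])
  have hq : 0 < ∑ j, (G *ᵥ v) j ^ 2 := by
    obtain ⟨j, hj⟩ := Function.ne_iff.mp hGv
    exact Finset.sum_pos' (fun j _ => sq_nonneg _) ⟨j, Finset.mem_univ j, sq_pos_of_ne_zero hj⟩
  have hsq : (g ⬝ᵥ v) ^ 2 = μ * ∑ j, (G *ᵥ v) j ^ 2 := by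
    have := congrArg (· ⬝ᵥ v) hv
    simpa only [vecMulVec_self_mulVec, smul_dotProduct, smul_eq_mul, ← sq,
      transpose_mul_self_mulVec_dotProduct_self] using this
  refine ⟨(√(∑ j, (G *ᵥ v) j ^ 2))⁻¹ • v, ?_, ?_⟩
  · simp only [mulVec_smul, Pi.smul_apply, smul_eq_mul, mul_pow, ← Finset.mul_sum, inv_pow,
      Real.sq_sqrt hq.le, inv_mul_cancel₀ hq.ne']
  · rw [dotProduct_smul, smul_eq_mul, mul_pow, inv_pow, Real.sq_sqrt hq.le, hsq]
    field_simp

theorem nonneg_of_mem_pencilEigenvalues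
    (hμ : μ ∈ pencilEigenvalues (vecMulVec g g) (Gᵀ * G)) : 0 ≤ μ := by
  obtain ⟨v, -, hv⟩ := exists_sq_dotProduct_eq_of_mem_pencilEigenvalues hμ
  exact hv ▸ sq_nonneg _

theorem sq_dotProduct_le_of_isGreatest_pencilEigenvalues
    (hker : ∀ a, G *ᵥ a = 0 → g ⬝ᵥ a = 0)
    (hμ : IsGreatest (pencilEigenvalues (vecMulVec g g) (Gᵀ * G)) μ) (a : ι → ℝ) :
    (g ⬝ᵥ a) ^ 2 ≤ μ * ∑ j, (G *ᵥ a) j ^ 2 := by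
  obtain ⟨u, hu⟩ := exists_transpose_mul_self_mulVec_eq G hker
  have hgu : g ⬝ᵥ u ≤ μ := by
    rcases eq_or_ne g 0 with rfl | hg
    · simpa using nonneg_of_mem_pencilEigenvalues hμ.1
    · exact hμ.2 ⟨u, hu ▸ hg, by rw [vecMulVec_self_mulVec, hu]⟩
  calc (g ⬝ᵥ a) ^ 2 = (G *ᵥ u ⬝ᵥ G *ᵥ a) ^ 2 := by
        rw [← hu, transpose_mul_self_mulVec_dotProduct]
    _ ≤ (∑ j, (G *ᵥ u) j ^ 2) * ∑ j, (G *ᵥ a) j ^ 2 := Finset.sum_mul_sq_le_sq_mul_sq _ _ _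
    _ = (g ⬝ᵥ u) * ∑ j, (G *ᵥ a) j ^ 2 := by
        rw [← hu, transpose_mul_self_mulVec_dotProduct_self]
    _ ≤ μ * ∑ j, (G *ᵥ a) j ^ 2 := by gcongr

end RankOne

end Matrix

theorem optimal_bias_injection_attack_inf_norm
    {n m p : ℕ}
    (Gx : Matrix (Fin n) (Fin m) ℝ) (Gr : Matrix (Fin p) (Fin m) ℝ)
    (δ : ℝ) (hδ : 0 < δ)
    (hker : ∀ a : Fin m → ℝ, Gr.mulVec a = 0 → Gx.mulVec a = 0)
    (lami : Fin n → ℝ)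
    (hlami : ∀ i : Fin n, IsGreatest
      {μ : ℝ | ∃ v : Fin m → ℝ, (Grᵀ * Gr).mulVec v ≠ 0 ∧
        (Gxᵀ * Matrix.single i i (1 : ℝ) * Gx).mulVec v
          = μ • (Grᵀ * Gr).mulVec v} (lami i))
    (lamStar : ℝ)
    (hlamStar : IsGreatest (Set.range lami) lamStar) :
    IsGreatest
      {t : ℝ | ∃ a : Fin m → ℝ, (∑ i, (Gr.mulVec a i) ^ 2) ≤ δ ^ 2 ∧
        t = ⨆ i : Fin n, |Gx.mulVec a i|}
      (Real.sqrt lamStar * δ) := by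
  obtain ⟨⟨i₀, rfl⟩, hlami_le⟩ := hlamStar
  have : Nonempty (Fin n) := ⟨i₀⟩
  have hpencil (i : Fin n) :
      IsGreatest (pencilEigenvalues (vecMulVec (Gx i) (Gx i)) (Grᵀ * Gr)) (lami i) :=
    transpose_mul_single_mul Gx i ▸ hlami i
  have hnonneg : 0 ≤ lami i₀ := nonneg_of_mem_pencilEigenvalues (hpencil i₀).1
  have hbound (a : Fin m → ℝ) (ha : ∑ j, (Gr *ᵥ a) j ^ 2 ≤ δ ^ 2) (i : Fin n) :
      |(Gx *ᵥ a) i| ≤ √(lami i₀) * δ := by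
    rw [← Real.sqrt_sq hδ.le, ← Real.sqrt_mul hnonneg]
    refine Real.abs_le_sqrt ?_
    calc (Gx *ᵥ a) i ^ 2 ≤ lami i * ∑ j, (Gr *ᵥ a) j ^ 2 :=
          sq_dotProduct_le_of_isGreatest_pencilEigenvalues
            (fun a ha => congrFun (hker a ha) i) (hpencil i) a
      _ ≤ lami i₀ * δ ^ 2 := mul_le_mul (hlami_le ⟨i, rfl⟩) ha (by positivity) hnonneg
  obtain ⟨v, hv_norm, hv_val⟩ := exists_sq_dotProduct_eq_of_mem_pencilEigenvalues (hpencil i₀).1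
  have hfeas : ∑ j, (Gr *ᵥ (δ • v)) j ^ 2 ≤ δ ^ 2 := by
    simp [mulVec_smul, mul_pow, ← Finset.mul_sum, hv_norm]
  have hattain : |(Gx *ᵥ (δ • v)) i₀| = √(lami i₀) * δ := by
    rw [mulVec_smul, Pi.smul_apply, smul_eq_mul, abs_mul, abs_of_pos hδ, mul_comm,
      ← Real.sqrt_sq_eq_abs, ← hv_val]
    rfl
  refine ⟨⟨δ • v, hfeas, le_antisymm ?_ (ciSup_le (hbound _ hfeas))⟩, ?_⟩
  · exact le_ciSup_of_le (Set.finite_range _).bddAbove i₀ hattain.ge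
  · rintro t ⟨a, ha, rfl⟩
    exact ciSup_le (hbound a ha)
end

section
/- Let Ā ∈ ℝ^{N×N}, C̄ ∈ ℝ^{p×N}, ψ₀ ∈ ℝ^N, and suppose there exist γ ≤ δ² and a symmetric positive definite P ∈ ℝ^{N×N} such that ψ₀ᵀ P ψ₀ ≤ 1, the block matrix [[P, C̄ᵀ],[C̄, γI]] is positive semidefinite, and ĀᵀPĀ − P is negative semidefinite. Then the autonomous system ψ_{k+1} = Ā ψ_k, r_k = C̄ ψ_k with ψ_0 = ψ₀ satisfies ‖r_k‖₂² ≤ δ² for all k ≥ 0. -/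
/-! The quadratic form `V ψ = ψᵀ P ψ` is a Lyapunov function: `P - ĀᵀPĀ ⪰ 0` makes it
non-increasing along the trajectory, so `V (ψ k) ≤ V ψ₀ ≤ 1`. Testing the block LMI
`[[P, C̄ᵀ], [C̄, γI]] ⪰ 0` on the vectors `(x, t • C̄x)` gives a quadratic polynomial in `t` that
is nonnegative everywhere; its discriminant yields `‖C̄x‖⁴ ≤ γ ‖C̄x‖² · V x`, hence
`‖r_k‖² ≤ γ · V (ψ k) ≤ δ²` whenever `r_k ≠ 0`. -/

open Matrix

variable {m n : Type*} [Fintype m] [Fintype n]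

lemma Matrix.dotProduct_mulVec_mulVec_le_of_posSemidef_sub {A P : Matrix n n ℝ}
    (h : (P - Aᵀ * P * A).PosSemidef) (x : n → ℝ) :
    A *ᵥ x ⬝ᵥ P *ᵥ (A *ᵥ x) ≤ x ⬝ᵥ P *ᵥ x := by
  have hx := h.dotProduct_mulVec_nonneg x
  rw [star_trivial, sub_mulVec, dotProduct_sub, ← mulVec_mulVec, ← mulVec_mulVec,
    dotProduct_mulVec x Aᵀ, vecMul_transpose] at hx
  linarith

lemma Matrix.antitone_dotProduct_mulVec_of_posSemidef_sub {A P : Matrix n n ℝ}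
    (h : (P - Aᵀ * P * A).PosSemidef) {ψ : ℕ → n → ℝ} (hstep : ∀ k, ψ (k + 1) = A *ᵥ ψ k) :
    Antitone fun k => ψ k ⬝ᵥ P *ᵥ ψ k :=
  antitone_nat_of_succ_le fun k => by
    simpa only [hstep k] using dotProduct_mulVec_mulVec_le_of_posSemidef_sub h (ψ k)

section fromBlocks

variable [DecidableEq m] {P : Matrix n n ℝ} {C : Matrix m n ℝ} {γ : ℝ}

lemma Matrix.PosSemidef.fromBlocks_smul_one_quadratic_nonneg
    (h : (fromBlocks P Cᵀ C (γ • (1 : Matrix m m ℝ))).PosSemidef) (x : n → ℝ) (t : ℝ) :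
    0 ≤ γ * (C *ᵥ x ⬝ᵥ C *ᵥ x) * (t * t) + 2 * (C *ᵥ x ⬝ᵥ C *ᵥ x) * t + x ⬝ᵥ P *ᵥ x := by
  have hxt := h.dotProduct_mulVec_nonneg (Sum.elim x (t • C *ᵥ x))
  have hCT : x ⬝ᵥ Cᵀ *ᵥ (C *ᵥ x) = C *ᵥ x ⬝ᵥ C *ᵥ x := by
    rw [dotProduct_mulVec, vecMul_transpose]
  rw [star_trivial, fromBlocks_mulVec, sumElim_dotProduct_sumElim] at hxt
  simp only [Sum.elim_comp_inl, Sum.elim_comp_inr, dotProduct_add, mulVec_smul, dotProduct_smul,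
    smul_dotProduct, smul_eq_mul, smul_mulVec, one_mulVec, hCT] at hxt
  linarith

lemma Matrix.PosSemidef.dotProduct_mulVec_nonneg_of_fromBlocks_smul_one
    (h : (fromBlocks P Cᵀ C (γ • (1 : Matrix m m ℝ))).PosSemidef) (x : n → ℝ) :
    0 ≤ x ⬝ᵥ P *ᵥ x := by
  simpa using h.fromBlocks_smul_one_quadratic_nonneg x 0

/-- Not cancelled to `‖C x‖² ≤ γ · xᵀPx`: that fails when `m` is empty and `γ < 0`. -/
lemma Matrix.PosSemidef.sq_dotProduct_mulVec_self_le_of_fromBlocks_smul_one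
    (h : (fromBlocks P Cᵀ C (γ • (1 : Matrix m m ℝ))).PosSemidef) (x : n → ℝ) :
    (C *ᵥ x ⬝ᵥ C *ᵥ x) ^ 2 ≤ γ * (C *ᵥ x ⬝ᵥ C *ᵥ x) * (x ⬝ᵥ P *ᵥ x) := by
  have hdisc := discrim_le_zero (h.fromBlocks_smul_one_quadratic_nonneg x)
  rw [discrim] at hdisc
  linarith

end fromBlocks

theorem stealthiness_LMI_output_peak_bound_general
    {N p : ℕ}
    (Abar : Matrix (Fin N) (Fin N) ℝ) (Cbar : Matrix (Fin p) (Fin N) ℝ)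
    (ψ₀ : Fin N → ℝ) (δ γ : ℝ)
    (hγδ : γ ≤ δ ^ 2)
    (P : Matrix (Fin N) (Fin N) ℝ)
    (hinit : ψ₀ ⬝ᵥ P.mulVec ψ₀ ≤ 1)
    (hblock : (Matrix.fromBlocks P Cbarᵀ Cbar (γ • (1 : Matrix (Fin p) (Fin p) ℝ))).PosSemidef)
    (hlyap : (P - Abarᵀ * P * Abar).PosSemidef)
    (ψ : ℕ → Fin N → ℝ)
    (hψ0 : ψ 0 = ψ₀)
    (hstep : ∀ k, ψ (k + 1) = Abar.mulVec (ψ k)) :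
    ∀ k, (∑ i, (Cbar.mulVec (ψ k) i) ^ 2) ≤ δ ^ 2 := by
  subst hψ0
  intro k
  have hV : ψ k ⬝ᵥ P *ᵥ ψ k ≤ 1 :=
    (antitone_dotProduct_mulVec_of_posSemidef_sub hlyap hstep (Nat.zero_le k)).trans hinit
  have hV0 := hblock.dotProduct_mulVec_nonneg_of_fromBlocks_smul_one (ψ k)
  have hout := hblock.sq_dotProduct_mulVec_self_le_of_fromBlocks_smul_one (ψ k)
  have hsum : ∑ i, (Cbar *ᵥ ψ k) i ^ 2 = Cbar *ᵥ ψ k ⬝ᵥ Cbar *ᵥ ψ k := by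
    simp only [dotProduct, sq]
  have hγV : γ * (ψ k ⬝ᵥ P *ᵥ ψ k) ≤ δ ^ 2 := by
    nlinarith [mul_nonneg (sq_nonneg δ) (sub_nonneg.2 hV), mul_nonneg (sub_nonneg.2 hγδ) hV0]
  rw [hsum]
  nlinarith [dotProduct_self_star_nonneg (Cbar *ᵥ ψ k)]

theorem stealthiness_LMI_output_peak_bound
    {N p : ℕ}
    (Abar : Matrix (Fin N) (Fin N) ℝ) (Cbar : Matrix (Fin p) (Fin N) ℝ)
    (ψ₀ : Fin N → ℝ) (δ γ : ℝ)
    (hγδ : γ ≤ δ ^ 2)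
    (P : Matrix (Fin N) (Fin N) ℝ) (hP : P.PosDef)
    (hinit : ψ₀ ⬝ᵥ P.mulVec ψ₀ ≤ 1)
    (hblock : (Matrix.fromBlocks P Cbarᵀ Cbar (γ • (1 : Matrix (Fin p) (Fin p) ℝ))).PosSemidef)
    (hlyap : (P - Abarᵀ * P * Abar).PosSemidef)
    (ψ : ℕ → Fin N → ℝ)
    (hψ0 : ψ 0 = ψ₀)
    (hstep : ∀ k, ψ (k + 1) = Abar.mulVec (ψ k)) :
    ∀ k, (∑ i, (Cbar.mulVec (ψ k) i) ^ 2) ≤ δ ^ 2 :=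
  stealthiness_LMI_output_peak_bound_general Abar Cbar ψ₀ δ γ hγδ P hinit hblock hlyap ψ hψ0 hstep
end
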